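/- arXiv:2403.10419 — 4 statements merged into one kernel-verified Lean document; each statement's English description precedes it below -/
import Mathlib

section
/- Let $(a_m)_{m\in\mathbb{N}}$ be a sequence of nonnegative real numbers and $E\subset\mathbb{N}\setminus\{0\}$ a finite nonempty set with $\beta_* = \min E$. Suppose (i) there exist constants $A\ge 1$, $D\ge 0$, $\alpha\ge 0$ such that $a_m \le A(m+D)^{\alpha}\max_{j\in E} a_{m+j}$ for all $m\in\mathbb{N}$, and (ii) there exist $A_0,b_0>0$, $D_0,\alpha_0\ge 0$ and $\sigma > 0$ such that $a_m \le A_0 (m+D_0)^{\alpha_0} b_0^{-m} m^{-m/\sigma}$ for all $m\ge 1$. If $0\le \alpha < \beta_*/\sigma$, then $a_m = 0$ for all $m\in\mathbb{N}$. -/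
open MvPolynomial Finset Filter

/-- Multi-index factorial `α! = ∏ i (α i)!`. -/
noncomputable def mfact {d : ℕ} (α : Fin d →₀ ℕ) : ℕ := ∏ i, Nat.factorial (α i)

/-- The apolar inner product `⟨P,Q⟩_a = ∑ α α! c_α conj(d_α)`. -/
noncomputable def apolar {d : ℕ} (P Q : MvPolynomial (Fin d) ℂ) : ℂ :=
  ∑ α ∈ P.support ∪ Q.support, (mfact α : ℂ) * P.coeff α * (starRingEnd ℂ) (Q.coeff α)

/-- The apolar norm. -/
noncomputable def apolarNorm {d : ℕ} (P : MvPolynomial (Fin d) ℂ) : ℝ :=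
  Real.sqrt (apolar P P).re

/-- The polynomial with conjugated coefficients. -/
noncomputable def conjPoly {d : ℕ} (Q : MvPolynomial (Fin d) ℂ) : MvPolynomial (Fin d) ℂ :=
  Q.map (starRingEnd ℂ)

/-- Iterated partial derivative `∂^α` on polynomials. -/
noncomputable def pderivMulti {d : ℕ} (α : Fin d →₀ ℕ) (f : MvPolynomial (Fin d) ℂ) :
    MvPolynomial (Fin d) ℂ :=
  (List.finRange d).foldr (fun i g => (fun h => MvPolynomial.pderiv i h)^[α i] g) f

/-- The differential operator `Q(D)` acting on polynomials. -/
noncomputable def diffOpPoly {d : ℕ} (Q f : MvPolynomial (Fin d) ℂ) : MvPolynomial (Fin d) ℂ :=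
  ∑ α ∈ Q.support, Q.coeff α • pderivMulti α f

/-- Partial derivative in direction `i` of a function on `ℂ^d`. -/
noncomputable def pd {d : ℕ} (i : Fin d) (f : (Fin d → ℂ) → ℂ) : (Fin d → ℂ) → ℂ :=
  fun z => fderiv ℂ f z (Pi.single i 1)

/-- Iterated partial derivative `∂^α` of a function on `ℂ^d`. -/
noncomputable def pdMulti {d : ℕ} (α : Fin d →₀ ℕ) (f : (Fin d → ℂ) → ℂ) : (Fin d → ℂ) → ℂ :=
  (List.finRange d).foldr (fun i g => (pd i)^[α i] g) f

/-- The differential operator `Q(D)` acting on functions on `ℂ^d`. -/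
noncomputable def diffOpFun {d : ℕ} (Q : MvPolynomial (Fin d) ℂ) (f : (Fin d → ℂ) → ℂ) :
    (Fin d → ℂ) → ℂ :=
  fun z => ∑ α ∈ Q.support, Q.coeff α * pdMulti α f z

/-- Euclidean norm on `ℂ^d`. -/
noncomputable def enorm' {d : ℕ} (z : Fin d → ℂ) : ℝ :=
  Real.sqrt (∑ i, ‖z i‖ ^ 2)

/-- `M(f,r) = sup_{|z|=r} |f(z)|`. -/
noncomputable def maxMod {d : ℕ} (f : (Fin d → ℂ) → ℂ) (r : ℝ) : ℝ :=
  sSup ((fun z => ‖f z‖) '' {z | enorm' z = r})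

/-- The order of an entire function on `ℂ^d`. -/
noncomputable def funOrder {d : ℕ} (f : (Fin d → ℂ) → ℂ) : ℝ :=
  Filter.limsup (fun r => Real.log (Real.log (maxMod f r)) / Real.log r) Filter.atTop

/-- Sup of `|g|` over the unit sphere of `ℂ^d`. -/
noncomputable def sphereSup {d : ℕ} (g : MvPolynomial (Fin d) ℂ) : ℝ :=
  sSup ((fun θ => ‖MvPolynomial.eval θ g‖) '' {θ : Fin d → ℂ | enorm' θ = 1})

lemma aux_mono_vanish (σ : ℝ) (hσ : 0 < σ) {x y : ℝ} (hx : 1 ≤ x) (hxy : x ≤ y) :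
    y ^ (-(y/σ)) ≤ x ^ (-(x/σ)) := by
  have hx0 : (0:ℝ) < x := lt_of_lt_of_le one_pos hx
  have hy0 : (0:ℝ) < y := hx0.trans_le hxy
  rw [Real.rpow_neg hx0.le, Real.rpow_neg hy0.le]
  have h : x ^ (x/σ) ≤ y ^ (y/σ) := by
    rw [Real.rpow_def_of_pos hx0, Real.rpow_def_of_pos hy0]
    apply Real.exp_le_exp.mpr
    have hlx : 0 ≤ Real.log x := Real.log_nonneg hx
    have hll : Real.log x ≤ Real.log y := Real.log_le_log hx0 hxy
    have hxσ : 0 ≤ x / σ := by positivity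
    have hdd : x / σ ≤ y / σ := by gcongr
    nlinarith
  exact inv_anti₀ (Real.rpow_pos_of_pos hx0 _) h

lemma aux_lin_vanish (m B D D0 kk x : ℝ) (hm : 0 ≤ m) (hB : 0 ≤ B) (hD : 0 ≤ D)
    (hD0 : 0 ≤ D0) (hk : 1 ≤ kk) (hx : x ≤ m + kk*B) :
    x + D + D0 ≤ (m + B + D + D0 + 1)*kk := by nlinarith

lemma aux_chain_vanish (a : ℕ → ℝ) (ha : ∀ m, 0 ≤ a m)
    (E : Finset ℕ) (hE : E.Nonempty)
    (A D α : ℝ) (hA : 1 ≤ A) (hD : 0 ≤ D) (hα : 0 ≤ α)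
    (h1 : ∀ m : ℕ, a m ≤ A * ((m : ℝ) + D) ^ α * E.sup' hE (fun j => a (m + j))) :
    ∀ k m : ℕ, ∃ n : ℕ, m + k * E.min' hE ≤ n ∧ n ≤ m + k * E.max' hE ∧
      a m ≤ (A * (((m + k * E.max' hE : ℕ) : ℝ) + D) ^ α) ^ k * a n := by
  intro k
  induction k with
  | zero => intro m; exact ⟨m, by simp, by simp, by simp⟩
  | succ k ih =>
    intro m
    obtain ⟨j, hjE, hj⟩ := E.exists_mem_eq_sup' hE (fun j => a (m + j))
    obtain ⟨n, hn1, hn2, hn3⟩ := ih (m + j)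
    have hjβ : E.min' hE ≤ j := E.min'_le j hjE
    have hjB : j ≤ E.max' hE := E.le_max' j hjE
    have hr1 : (k+1) * E.min' hE = k * E.min' hE + E.min' hE := by ring
    have hr2 : (k+1) * E.max' hE = k * E.max' hE + E.max' hE := by ring
    refine ⟨n, by omega, by omega, ?_⟩
    have hstep := h1 m
    rw [hj] at hstep
    set N : ℕ := m + (k+1) * E.max' hE with hN
    have hc1 : ((m:ℝ) + D) ≤ ((N : ℝ) + D) := by
      have : (m:ℝ) ≤ (N:ℝ) := Nat.cast_le.mpr (by omega)
      linarith
    have hc2 : (((m + j + k * E.max' hE : ℕ) : ℝ) + D) ≤ ((N : ℝ) + D) := by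
      have : ((m + j + k * E.max' hE : ℕ):ℝ) ≤ (N:ℝ) := Nat.cast_le.mpr (by omega)
      linarith
    have hmD : (0:ℝ) ≤ (m:ℝ) + D := by positivity
    have hmD2 : (0:ℝ) ≤ ((m + j + k * E.max' hE : ℕ):ℝ) + D := by positivity
    have hA0 : (0:ℝ) ≤ A := by linarith
    have hP1 : A * ((m:ℝ) + D) ^ α ≤ A * ((N:ℝ) + D) ^ α :=
      mul_le_mul_of_nonneg_left (Real.rpow_le_rpow hmD hc1 hα) hA0
    have hP2 : (A * (((m + j + k * E.max' hE : ℕ) : ℝ) + D) ^ α) ^ k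
        ≤ (A * ((N:ℝ) + D) ^ α) ^ k :=
      pow_le_pow_left₀ (mul_nonneg hA0 (Real.rpow_nonneg hmD2 α))
        (mul_le_mul_of_nonneg_left (Real.rpow_le_rpow hmD2 hc2 hα) hA0) k
    calc a m ≤ A * ((m:ℝ) + D) ^ α * a (m + j) := hstep
      _ ≤ A * ((m:ℝ) + D) ^ α *
          ((A * (((m + j + k * E.max' hE : ℕ) : ℝ) + D) ^ α) ^ k * a n) := by
        exact mul_le_mul_of_nonneg_left hn3 (mul_nonneg hA0 (Real.rpow_nonneg hmD α))
      _ ≤ (A * ((N:ℝ) + D) ^ α) * ((A * ((N:ℝ) + D) ^ α) ^ k * a n) := by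
        exact mul_le_mul hP1 (mul_le_mul_of_nonneg_right hP2 (ha n))
          (mul_nonneg (pow_nonneg (mul_nonneg hA0 (Real.rpow_nonneg hmD2 α)) k) (ha n))
          (mul_nonneg hA0 (Real.rpow_nonneg (le_trans hmD hc1) α))
      _ = (A * ((N:ℝ) + D) ^ α) ^ (k+1) * a n := by ring

set_option maxHeartbeats 1000000 in
/-- Vanishing lemma for sequences, case `0 ≤ α < β₊/σ`. -/
theorem stmt_0 (a : ℕ → ℝ) (ha : ∀ m, 0 ≤ a m)
    (E : Finset ℕ) (hE : E.Nonempty) (hE0 : 0 ∉ E)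
    (A D α : ℝ) (hA : 1 ≤ A) (hD : 0 ≤ D) (hα : 0 ≤ α)
    (h1 : ∀ m : ℕ, a m ≤ A * ((m : ℝ) + D) ^ α * E.sup' hE (fun j => a (m + j)))
    (A0 b0 D0 α0 σ : ℝ) (hA0 : 0 < A0) (hb0 : 0 < b0) (hD0 : 0 ≤ D0) (hα0 : 0 ≤ α0)
    (hσ : 0 < σ)
    (h2 : ∀ m : ℕ, 1 ≤ m →
      a m ≤ A0 * ((m : ℝ) + D0) ^ α0 / b0 ^ m * (m : ℝ) ^ (-(m : ℝ) / σ))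
    (hmain : α < (E.min' hE : ℝ) / σ) :
    ∀ m, a m = 0 := by
  have key := aux_chain_vanish a ha E hE A D α hA hD hα h1
  set β : ℕ := E.min' hE with hβdef
  set B : ℕ := E.max' hE with hBdef
  have hβ1 : 1 ≤ β := Nat.one_le_iff_ne_zero.mpr fun h => hE0 (h ▸ E.min'_mem hE)
  have hβB : β ≤ B := E.min'_le _ (E.max'_mem hE)
  have hA' : (0:ℝ) < A := lt_of_lt_of_le one_pos hA
  intro m
  set c : ℝ := max (1/b0) 1 with hcdef
  have hc1 : (1:ℝ) ≤ c := le_max_right _ _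
  have hbc : 1/b0 ≤ c := le_max_left _ _
  have hc0 : (0:ℝ) < c := lt_of_lt_of_le one_pos hc1
  have hβσ : α < (β:ℝ)/σ := hmain
  set ε : ℝ := ((β:ℝ)/σ - α)/(2*(α+1)) with hεdef
  have hε : 0 < ε := by
    apply div_pos (by linarith) (by positivity)
  set γ : ℝ := (β:ℝ)/σ - α*(1+ε) with hγdef
  have hεval : (α+1)*ε = ((β:ℝ)/σ - α)/2 := by
    rw [hεdef]; field_simp
  have hγ : 0 < γ := by
    have h1' : α*ε ≤ (α+1)*ε := by nlinarith
    rw [hγdef]; nlinarith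
  -- eventually facts
  have hcast : Tendsto (fun k : ℕ => (k:ℝ)) atTop atTop := tendsto_natCast_atTop_atTop
  have hkε : Tendsto (fun k:ℕ => (k:ℝ)^ε) atTop atTop :=
    (tendsto_rpow_atTop hε).comp hcast
  have hkγ : Tendsto (fun k:ℕ => (k:ℝ)^(γ/3)) atTop atTop :=
    (tendsto_rpow_atTop (by positivity)).comp hcast
  have hklin : Tendsto (fun k:ℕ => γ*(k:ℝ)/3) atTop atTop :=
    (hcast.const_mul_atTop hγ).atTop_div_const (by norm_num)
  have hev1 : ∀ᶠ k:ℕ in atTop, ((m:ℝ) + (B:ℝ) + D + D0 + 1) ≤ (k:ℝ)^ε :=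
    hkε.eventually_ge_atTop _
  have hev2 : ∀ᶠ k:ℕ in atTop, A * c^B ≤ (k:ℝ)^(γ/3) := hkγ.eventually_ge_atTop _
  have hev3 : ∀ᶠ k:ℕ in atTop, (1+ε)*α0 ≤ γ*(k:ℝ)/3 := hklin.eventually_ge_atTop _
  have hev4 : ∀ᶠ k:ℕ in atTop, (1:ℝ) ≤ γ*(k:ℝ)/3 := hklin.eventually_ge_atTop _
  have hev5 : ∀ᶠ k:ℕ in atTop, 1 ≤ k := eventually_ge_atTop 1
  have hbound : ∀ᶠ k:ℕ in atTop, a m ≤ (A0 * c^m) / (k:ℝ) := by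
    filter_upwards [hev1, hev2, hev3, hev4, hev5] with k e1 e2 e3 e4 e5
    obtain ⟨n, hn1, hn2, hn3⟩ := key k m
    have hk1 : (1:ℝ) ≤ (k:ℝ) := Nat.one_le_cast.mpr e5
    have hk0 : (0:ℝ) < (k:ℝ) := by linarith
    have hkβnat : 1 ≤ k * β := Nat.one_le_iff_ne_zero.mpr (by positivity)
    have hn1' : 1 ≤ n := by omega
    have hn_lb : (k:ℝ) * (β:ℝ) ≤ (n:ℝ) := by
      have h' : k * β ≤ n := by omega
      have : ((k*β : ℕ):ℝ) ≤ (n:ℝ) := Nat.cast_le.mpr h'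
      push_cast at this
      linarith
    have hkβ1 : (1:ℝ) ≤ (k:ℝ) * (β:ℝ) := by
      have : (1:ℝ) ≤ (β:ℝ) := Nat.one_le_cast.mpr hβ1
      nlinarith
    set X : ℝ := ((m + k * B : ℕ) : ℝ) + D with hXdef
    have hXnn : (0:ℝ) ≤ X := by positivity
    have hXk : X ≤ (k:ℝ)^(1+ε) := by
      have hb' : (0:ℝ) ≤ (B:ℝ) := Nat.cast_nonneg B
      have hm' : (0:ℝ) ≤ (m:ℝ) := Nat.cast_nonneg m
      have step1 : X ≤ ((m:ℝ) + (B:ℝ) + D + D0 + 1) * (k:ℝ) := by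
        have := aux_lin_vanish (m:ℝ) (B:ℝ) D D0 (k:ℝ) ((m:ℝ) + (k:ℝ)*(B:ℝ)) hm' hb' hD hD0 hk1 le_rfl
        rw [hXdef]; push_cast; linarith
      calc X ≤ ((m:ℝ) + (B:ℝ) + D + D0 + 1) * (k:ℝ) := step1
        _ ≤ (k:ℝ)^ε * (k:ℝ) := mul_le_mul_of_nonneg_right e1 hk0.le
        _ = (k:ℝ)^(1+ε) := by
            rw [Real.rpow_add hk0, Real.rpow_one]; ring
    have hX0k : ((n:ℝ) + D0) ≤ (k:ℝ)^(1+ε) := by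
      have hb' : (0:ℝ) ≤ (B:ℝ) := Nat.cast_nonneg B
      have hm' : (0:ℝ) ≤ (m:ℝ) := Nat.cast_nonneg m
      have hn2' : (n:ℝ) ≤ ((m + k * B : ℕ):ℝ) := Nat.cast_le.mpr hn2
      have step1 : (n:ℝ) + D0 ≤ ((m:ℝ) + (B:ℝ) + D + D0 + 1) * (k:ℝ) := by
        have := aux_lin_vanish (m:ℝ) (B:ℝ) D D0 (k:ℝ) (n:ℝ) hm' hb' hD hD0 hk1
          (by push_cast at hn2'; linarith)
        linarith
      calc (n:ℝ) + D0 ≤ ((m:ℝ) + (B:ℝ) + D + D0 + 1) * (k:ℝ) := step1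
        _ ≤ (k:ℝ)^ε * (k:ℝ) := mul_le_mul_of_nonneg_right e1 hk0.le
        _ = (k:ℝ)^(1+ε) := by rw [Real.rpow_add hk0, Real.rpow_one]; ring
    -- factor bounds
    have F1 : X ^ α ≤ (k:ℝ)^((1+ε)*α) := by
      calc X ^ α ≤ ((k:ℝ)^(1+ε))^α := Real.rpow_le_rpow hXnn hXk hα
        _ = (k:ℝ)^((1+ε)*α) := (Real.rpow_mul hk0.le _ _).symm
    have F2 : ((n:ℝ) + D0) ^ α0 ≤ (k:ℝ)^((1+ε)*α0) := by
      calc ((n:ℝ)+D0) ^ α0 ≤ ((k:ℝ)^(1+ε))^α0 :=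
          Real.rpow_le_rpow (by positivity) hX0k hα0
        _ = (k:ℝ)^((1+ε)*α0) := (Real.rpow_mul hk0.le _ _).symm
    have F3 : ((1:ℝ)/b0) ^ n ≤ c ^ (m + k * B) :=
      le_trans (pow_le_pow_left₀ (by positivity) hbc n) (pow_le_pow_right₀ hc1 hn2)
    have F4 : (n:ℝ) ^ (-(n:ℝ)/σ) ≤ (k:ℝ) ^ (-((k:ℝ)*(β:ℝ))/σ) := by
      have step1 : (n:ℝ) ^ (-(n:ℝ)/σ) ≤ ((k:ℝ)*(β:ℝ)) ^ (-((k:ℝ)*(β:ℝ))/σ) := by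
        rw [neg_div, neg_div]
        exact aux_mono_vanish σ hσ hkβ1 hn_lb
      refine le_trans step1 ?_
      apply Real.rpow_le_rpow_of_nonpos hk0 ?_ ?_
      · have hb1 : (1:ℝ) ≤ (β:ℝ) := Nat.one_le_cast.mpr hβ1
        nlinarith
      · rw [neg_div]
        simp only [neg_nonpos]
        positivity
    -- assemble
    have h2n := h2 n hn1'
    have h2n' : a n ≤ A0 * ((n:ℝ)+D0)^α0 * ((1:ℝ)/b0)^n * (n:ℝ)^(-(n:ℝ)/σ) := by
      have : A0 * ((n:ℝ)+D0)^α0 / b0^n = A0 * ((n:ℝ)+D0)^α0 * ((1:ℝ)/b0)^n := by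
        rw [div_pow, one_pow]; ring
      rw [← this]; exact h2n
    have G : a m ≤ (A * (k:ℝ)^((1+ε)*α)) ^ k *
        (A0 * (k:ℝ)^((1+ε)*α0) * c^(m+k*B) * (k:ℝ)^(-((k:ℝ)*(β:ℝ))/σ)) := by
      calc a m ≤ (A * X ^ α) ^ k * a n := hn3
        _ ≤ (A * X ^ α) ^ k *
            (A0 * ((n:ℝ)+D0)^α0 * ((1:ℝ)/b0)^n * (n:ℝ)^(-(n:ℝ)/σ)) := by
          exact mul_le_mul_of_nonneg_left h2n'
            (pow_nonneg (mul_nonneg hA'.le (Real.rpow_nonneg hXnn α)) k)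
        _ ≤ (A * (k:ℝ)^((1+ε)*α)) ^ k *
            (A0 * (k:ℝ)^((1+ε)*α0) * c^(m+k*B) * (k:ℝ)^(-((k:ℝ)*(β:ℝ))/σ)) := by
          apply mul_le_mul
          · exact pow_le_pow_left₀ (mul_nonneg hA'.le (Real.rpow_nonneg hXnn α))
              (mul_le_mul_of_nonneg_left F1 hA'.le) k
          · apply mul_le_mul
            · apply mul_le_mul
              · exact mul_le_mul_of_nonneg_left F2 hA0.le
              · exact F3
              · positivity
              · exact mul_nonneg hA0.le (Real.rpow_nonneg (by positivity) _)
            · exact F4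
            · positivity
            · positivity
          · positivity
          · positivity
    -- now pure-k estimates
    have hR : (A * c^B)^k ≤ (k:ℝ)^(γ/3*(k:ℕ)) := by
      calc (A * c^B)^k ≤ ((k:ℝ)^(γ/3))^k :=
          pow_le_pow_left₀ (by positivity) e2 k
        _ = (k:ℝ)^(γ/3*(k:ℕ)) := by
          rw [← Real.rpow_natCast ((k:ℝ)^(γ/3)) k, ← Real.rpow_mul hk0.le]
    have hα0k : (k:ℝ)^((1+ε)*α0) ≤ (k:ℝ)^(γ*(k:ℝ)/3) :=
      Real.rpow_le_rpow_of_exponent_le hk1 e3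
    have hpowk : ((k:ℝ)^((1+ε)*α))^k = (k:ℝ)^((1+ε)*α*(k:ℕ)) := by
      rw [← Real.rpow_natCast ((k:ℝ)^((1+ε)*α)) k, ← Real.rpow_mul hk0.le]
    have G2 : a m ≤ (A0 * c^m) *
        ((k:ℝ)^(γ/3*(k:ℕ)) * ((k:ℝ)^((1+ε)*α*(k:ℕ)) * ((k:ℝ)^(γ*(k:ℝ)/3) *
          (k:ℝ)^(-((k:ℝ)*(β:ℝ))/σ)))) := by
      have rearr : (A * (k:ℝ)^((1+ε)*α)) ^ k *
          (A0 * (k:ℝ)^((1+ε)*α0) * c^(m+k*B) * (k:ℝ)^(-((k:ℝ)*(β:ℝ))/σ))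
          = (A0 * c^m) * ((A * c^B)^k * ((k:ℝ)^((1+ε)*α))^k * (k:ℝ)^((1+ε)*α0)
            * (k:ℝ)^(-((k:ℝ)*(β:ℝ))/σ)) := by
        rw [mul_pow, mul_pow, pow_add, pow_mul]; ring
      refine le_trans G ?_
      rw [rearr, hpowk]
      have hACB : (0:ℝ) ≤ (A * c^B)^k :=
        pow_nonneg (mul_nonneg hA'.le (pow_nonneg hc0.le B)) k
      have u1 : (A * c^B)^k * (k:ℝ)^((1+ε)*α*(k:ℕ))
          ≤ (k:ℝ)^(γ/3*(k:ℕ)) * (k:ℝ)^((1+ε)*α*(k:ℕ)) :=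
        mul_le_mul_of_nonneg_right hR (Real.rpow_nonneg hk0.le _)
      have u2 : (A * c^B)^k * (k:ℝ)^((1+ε)*α*(k:ℕ)) * (k:ℝ)^((1+ε)*α0)
          ≤ (k:ℝ)^(γ/3*(k:ℕ)) * (k:ℝ)^((1+ε)*α*(k:ℕ)) * (k:ℝ)^(γ*(k:ℝ)/3) :=
        mul_le_mul u1 hα0k (Real.rpow_nonneg hk0.le _)
          (mul_nonneg (Real.rpow_nonneg hk0.le _) (Real.rpow_nonneg hk0.le _))
      have u3 : (A * c^B)^k * (k:ℝ)^((1+ε)*α*(k:ℕ)) * (k:ℝ)^((1+ε)*α0)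
            * (k:ℝ)^(-((k:ℝ)*(β:ℝ))/σ)
          ≤ (k:ℝ)^(γ/3*(k:ℕ)) * (k:ℝ)^((1+ε)*α*(k:ℕ)) * (k:ℝ)^(γ*(k:ℝ)/3)
            * (k:ℝ)^(-((k:ℝ)*(β:ℝ))/σ) :=
        mul_le_mul_of_nonneg_right u2 (Real.rpow_nonneg hk0.le _)
      have this2 : (A * c^B)^k * (k:ℝ)^((1+ε)*α*(k:ℕ)) * (k:ℝ)^((1+ε)*α0)
          * (k:ℝ)^(-((k:ℝ)*(β:ℝ))/σ)
          ≤ (k:ℝ)^(γ/3*(k:ℕ)) * ((k:ℝ)^((1+ε)*α*(k:ℕ)) * ((k:ℝ)^(γ*(k:ℝ)/3) *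
            (k:ℝ)^(-((k:ℝ)*(β:ℝ))/σ))) := by
        refine le_trans u3 (le_of_eq ?_); ring
      exact mul_le_mul_of_nonneg_left this2 (by positivity)
    -- combine exponents
    have hcomb : (k:ℝ)^(γ/3*(k:ℕ)) * ((k:ℝ)^((1+ε)*α*(k:ℕ)) * ((k:ℝ)^(γ*(k:ℝ)/3) *
          (k:ℝ)^(-((k:ℝ)*(β:ℝ))/σ)))
        = (k:ℝ)^(γ/3*(k:ℕ) + ((1+ε)*α*(k:ℕ) + (γ*(k:ℝ)/3 + (-((k:ℝ)*(β:ℝ))/σ)))) := by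
      rw [Real.rpow_add hk0, Real.rpow_add hk0, Real.rpow_add hk0]
    have hexp : γ/3*(k:ℕ) + ((1+ε)*α*(k:ℕ) + (γ*(k:ℝ)/3 + (-((k:ℝ)*(β:ℝ))/σ)))
        = -(γ*(k:ℝ)/3) := by
      rw [hγdef]; field_simp; ring
    have hfinal : (k:ℝ)^(-(γ*(k:ℝ)/3)) ≤ (k:ℝ)^(-(1:ℝ)) :=
      Real.rpow_le_rpow_of_exponent_le hk1 (by linarith)
    calc a m ≤ _ := G2
      _ = (A0 * c^m) * (k:ℝ)^(-(γ*(k:ℝ)/3)) := by rw [hcomb, hexp]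
      _ ≤ (A0 * c^m) * (k:ℝ)^(-(1:ℝ)) := by
          exact mul_le_mul_of_nonneg_left hfinal (by positivity)
      _ = (A0 * c^m) / (k:ℝ) := by
          rw [Real.rpow_neg_one]; rw [div_eq_mul_inv]
  -- conclude
  have htend : Tendsto (fun k:ℕ => (A0 * c^m) / (k:ℝ)) atTop (nhds 0) :=
    tendsto_const_div_atTop_nhds_zero_nat _
  have ham : a m ≤ 0 := ge_of_tendsto htend hbound
  exact le_antisymm ham (ha m)
end

section
/- Let $(a_m)_{m\in\mathbb{N}}$ be a sequence of nonnegative real numbers and $E\subset\mathbb{N}\setminus\{0\}$ a finite nonempty set with $\beta_* = \min E$. Suppose there exist constants $A\ge 1$, $D\ge 0$, $\sigma>0$ and $\alpha = \beta_*/\sigma > 0$ such that $a_m \le A(m+D)^{\alpha}\max_{j\in E} a_{m+j}$ for all $m$, and constants $A_0, b_0 > 0$, $D_0,\alpha_0\ge 0$ such that $a_m \le A_0 (m+D_0)^{\alpha_0} b_0^{-m} m^{-m/\sigma}$ for all $m\ge 1$. If additionally $A < b_0^{\beta_*}$, then $a_m = 0$ for all $m\in\mathbb{N}$. -/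
open MvPolynomial Finset Filter

set_option maxHeartbeats 1000000 in
/-- Vanishing lemma for sequences, boundary case `α = β₊/σ`, assuming `A < b₀^β₊`. -/
theorem stmt_1 (a : ℕ → ℝ) (ha : ∀ m, 0 ≤ a m)
    (E : Finset ℕ) (hE : E.Nonempty) (hE0 : 0 ∉ E)
    (A D α : ℝ) (hA : 1 ≤ A) (hD : 0 ≤ D) (σ : ℝ) (hσ : 0 < σ)
    (hαval : α = (E.min' hE : ℝ) / σ) (hαpos : 0 < α)
    (h1 : ∀ m : ℕ, a m ≤ A * ((m : ℝ) + D) ^ α * E.sup' hE (fun j => a (m + j)))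
    (A0 b0 D0 α0 : ℝ) (hA0 : 0 < A0) (hb0 : 0 < b0) (hD0 : 0 ≤ D0) (hα0 : 0 ≤ α0)
    (h2 : ∀ m : ℕ, 1 ≤ m →
      a m ≤ A0 * ((m : ℝ) + D0) ^ α0 / b0 ^ m * (m : ℝ) ^ (-(m : ℝ) / σ))
    (hAb : A < b0 ^ (E.min' hE)) :
    ∀ m, a m = 0 := by
  set β := E.min' hE with hβdef
  set B := E.max' hE with hBdef
  have hβE : β ∈ E := E.min'_mem hE
  have hβ1 : 1 ≤ β := Nat.one_le_iff_ne_zero.mpr fun h => hE0 (h ▸ hβE)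
  have hApos : (0:ℝ) < A := lt_of_lt_of_le one_pos hA
  have hβR : (0:ℝ) < (β:ℝ) := by exact_mod_cast hβ1
  -- iteration lemma
  have key : ∀ k m, ∃ n : ℕ, m + k * β ≤ n ∧ n ≤ m + k * B ∧
      a m ≤ A ^ k * ((n : ℝ) + D) ^ ((k : ℝ) * α) * a n := by
    intro k
    induction k with
    | zero =>
      intro m
      refine ⟨m, by simp, by simp, ?_⟩
      simp
    | succ k ih =>
      intro m
      obtain ⟨n, hn1, hn2, hn3⟩ := ih m
      obtain ⟨j, hjE, hj⟩ := Finset.exists_mem_eq_sup' hE (fun j => a (n + j))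
      have hjβ : β ≤ j := E.min'_le j hjE
      have hjB : j ≤ B := E.le_max' j hjE
      have hsm1 : (k+1) * β = k * β + β := by ring
      have hsm2 : (k+1) * B = k * B + B := by ring
      refine ⟨n + j, by omega, by omega, ?_⟩
      have hbase : (0:ℝ) ≤ (n : ℝ) + D := by positivity
      have hstep : a n ≤ A * ((n : ℝ) + D) ^ α * a (n + j) := by
        have := h1 n
        rwa [hj] at this
      have hnonneg : (0:ℝ) ≤ A ^ k * ((n : ℝ) + D) ^ ((k : ℝ) * α) := by positivity
      have hcast : (((k+1 : ℕ)) : ℝ) * α = (k : ℝ) * α + α := by push_cast; ring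
      calc a m ≤ A ^ k * ((n : ℝ) + D) ^ ((k : ℝ) * α) * a n := hn3
        _ ≤ A ^ k * ((n : ℝ) + D) ^ ((k : ℝ) * α) * (A * ((n : ℝ) + D) ^ α * a (n + j)) :=
            mul_le_mul_of_nonneg_left hstep hnonneg
        _ = A ^ (k + 1) * ((n : ℝ) + D) ^ (((k+1 : ℕ) : ℝ) * α) * a (n + j) := by
            rw [hcast, Real.rpow_add' hbase (by positivity)]
            ring
        _ ≤ A ^ (k + 1) * (((n + j : ℕ) : ℝ) + D) ^ (((k+1 : ℕ) : ℝ) * α) * a (n + j) := by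
            gcongr
            · exact ha _
            · push_cast; linarith [Nat.cast_nonneg (α := ℝ) j]
  have hbβ : (0:ℝ) < b0 ^ β := by positivity
  set ρ := A / b0 ^ β with hρdef
  have hρ0 : 0 < ρ := by positivity
  have hρ1 : ρ < 1 := (div_lt_one hbβ).mpr hAb
  set e := Real.exp (α * D / (β:ℝ)) with hedef
  have he1 : 1 ≤ e := Real.one_le_exp (by positivity)
  set N := ⌈α0⌉₊ with hNdef
  intro m
  obtain ⟨K, hK⟩ := exists_nat_ge (b0 ^ (-σ))
  set Cm : ℝ := (m:ℝ) + (B:ℝ) + D0 + 1 with hCmdef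
  have hCm0 : (0:ℝ) < Cm := by positivity
  have main : ∀ k, K + 1 ≤ k →
      a m ≤ (e * A0 * Cm ^ α0) * ((k:ℝ) ^ N * ρ ^ k) := by
    intro k hk
    obtain ⟨n, hn1, hn2, hn3⟩ := key k m
    have hk1 : 1 ≤ k := by omega
    have hkn : k ≤ n := by
      have : k ≤ k * β := Nat.le_mul_of_pos_right k (by omega)
      omega
    have hn1' : 1 ≤ n := le_trans hk1 hkn
    set x := (n:ℝ) with hxdef
    have hx1 : (1:ℝ) ≤ x := Nat.one_le_cast.mpr hn1'
    have hx0 : (0:ℝ) < x := lt_of_lt_of_le one_pos hx1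
    have hkR : (1:ℝ) ≤ (k:ℝ) := by exact_mod_cast hk1
    have hkR0 : (0:ℝ) < (k:ℝ) := lt_of_lt_of_le one_pos hkR
    have hxk : (k:ℝ) ≤ x := Nat.cast_le.mpr hkn
    have hxkβ : (k:ℝ) * (β:ℝ) ≤ x := by
      have h7 : (k * β : ℕ) ≤ n := by omega
      have h8 : ((k * β : ℕ) : ℝ) ≤ ((n:ℕ) : ℝ) := Nat.cast_le.mpr h7
      push_cast at h8
      exact h8
    set r : ℕ := n - k * β with hrdef
    have hrn : n = k * β + r := by omega
    have hxr : x = (k:ℝ) * (β:ℝ) + (r:ℝ) := by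
      have h9 : ((n:ℕ):ℝ) = ((k * β + r : ℕ) : ℝ) := by exact_mod_cast congrArg (Nat.cast (R := ℝ)) hrn
      push_cast at h9
      exact h9
    -- F1 : (x+D)^(kα) ≤ x^(kα) * e
    have hkα : (0:ℝ) ≤ (k:ℝ) * α := by positivity
    have F1 : (x + D) ^ ((k:ℝ) * α) ≤ x ^ ((k:ℝ) * α) * e := by
      have hxe : x + D ≤ x * Real.exp (D / x) := by
        have h' := Real.add_one_le_exp (D / x)
        have h'' : x * (D / x + 1) ≤ x * Real.exp (D / x) :=
          mul_le_mul_of_nonneg_left h' hx0.le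
        have h''' : x * (D / x + 1) = x + D := by field_simp; ring
        linarith
      calc (x + D) ^ ((k:ℝ) * α) ≤ (x * Real.exp (D / x)) ^ ((k:ℝ) * α) :=
            Real.rpow_le_rpow (by positivity) hxe hkα
        _ = x ^ ((k:ℝ) * α) * Real.exp (D / x) ^ ((k:ℝ) * α) :=
            Real.mul_rpow hx0.le (Real.exp_nonneg _)
        _ = x ^ ((k:ℝ) * α) * Real.exp (D / x * ((k:ℝ) * α)) := by
            rw [Real.exp_mul]
        _ ≤ x ^ ((k:ℝ) * α) * e := by
            apply mul_le_mul_of_nonneg_left _ (by positivity)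
            apply Real.exp_le_exp.mpr
            have hdx : D / x ≤ D / ((k:ℝ) * (β:ℝ)) :=
              div_le_div_of_nonneg_left hD (by positivity) hxkβ
            have : D / ((k:ℝ) * (β:ℝ)) * ((k:ℝ) * α) = α * D / (β:ℝ) := by
              field_simp
            calc D / x * ((k:ℝ) * α) ≤ D / ((k:ℝ) * (β:ℝ)) * ((k:ℝ) * α) :=
                  mul_le_mul_of_nonneg_right hdx hkα
              _ = α * D / (β:ℝ) := this
    -- E1 : x^(kα) * x^(-x/σ) = x^(-(r:ℝ)/σ)
    have E1 : x ^ ((k:ℝ) * α) * x ^ (-x / σ) = x ^ (-(r:ℝ) / σ) := by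
      rw [← Real.rpow_add hx0]
      congr 1
      rw [hαval, hxr]
      field_simp
      ring
    -- E3 : b0^n = (b0^β)^k * b0^r
    have E3 : b0 ^ n = (b0 ^ β) ^ k * b0 ^ r := by
      rw [hrn, pow_add, mul_comm k β, pow_mul]
    -- E4 : (b0 * x^(1/σ))^(-(r:ℝ)) = x^(-(r:ℝ)/σ) * (b0^r)⁻¹
    have E4 : (b0 * x ^ (1/σ)) ^ (-(r:ℝ)) = x ^ (-(r:ℝ) / σ) * (b0 ^ r)⁻¹ := by
      rw [Real.mul_rpow hb0.le (by positivity), ← Real.rpow_mul hx0.le,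
        Real.rpow_neg hb0.le, Real.rpow_natCast]
      rw [show 1/σ * (-(r:ℝ)) = -(r:ℝ)/σ by field_simp]
      ring
    -- 1 ≤ b0 * x^(1/σ)
    have hb1 : 1 ≤ b0 * x ^ (1/σ) := by
      have hxK : b0 ^ (-σ) ≤ x := by
        calc b0 ^ (-σ) ≤ (K:ℝ) := hK
          _ ≤ (k:ℝ) := by exact_mod_cast Nat.le_of_succ_le hk
          _ ≤ x := hxk
      have h5 : (b0 ^ (-σ)) ^ (1/σ) ≤ x ^ (1/σ) :=
        Real.rpow_le_rpow (by positivity) hxK (by positivity)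
      have h6 : (b0 ^ (-σ)) ^ (1/σ) = b0⁻¹ := by
        rw [← Real.rpow_mul hb0.le, show -σ * (1/σ) = -1 by field_simp,
          Real.rpow_neg_one]
      have : b0 * b0⁻¹ ≤ b0 * x ^ (1/σ) := by
        apply mul_le_mul_of_nonneg_left _ hb0.le
        rw [← h6]; exact h5
      rwa [mul_inv_cancel₀ hb0.ne'] at this
    have hb2 : (b0 * x ^ (1/σ)) ^ (-(r:ℝ)) ≤ 1 :=
      Real.rpow_le_one_of_one_le_of_nonpos hb1 (neg_nonpos.mpr (Nat.cast_nonneg r))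
    -- polynomial bound
    have P : (x + D0) ^ α0 ≤ Cm ^ α0 * (k:ℝ) ^ N := by
      have hx2 : x + D0 ≤ Cm * (k:ℝ) := by
        have hxle : x ≤ (m:ℝ) + (k:ℝ) * (B:ℝ) := by
          have h9 : ((n:ℕ):ℝ) ≤ ((m + k * B : ℕ):ℝ) := Nat.cast_le.mpr hn2
          push_cast at h9
          exact h9
        have hm0 : (0:ℝ) ≤ (m:ℝ) := Nat.cast_nonneg m
        have hB0 : (0:ℝ) ≤ (B:ℝ) := Nat.cast_nonneg B
        nlinarith
      calc (x + D0) ^ α0 ≤ (Cm * (k:ℝ)) ^ α0 :=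
            Real.rpow_le_rpow (by positivity) hx2 hα0
        _ = Cm ^ α0 * (k:ℝ) ^ (α0 : ℝ) := Real.mul_rpow hCm0.le hkR0.le
        _ ≤ Cm ^ α0 * (k:ℝ) ^ ((N:ℕ):ℝ) := by
            gcongr
            · exact Nat.le_ceil α0
        _ = Cm ^ α0 * (k:ℝ) ^ N := by rw [Real.rpow_natCast]
    -- assemble
    have step2 : a m ≤ A ^ k * ((x + D) ^ ((k:ℝ) * α)) *
        (A0 * (x + D0) ^ α0 / b0 ^ n * x ^ (-x / σ)) := by
      refine le_trans hn3 (mul_le_mul_of_nonneg_left ?_ (by positivity))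
      exact h2 n hn1'
    have heq : A ^ k * (x ^ ((k:ℝ) * α) * e) *
        (A0 * (x + D0) ^ α0 / b0 ^ n * x ^ (-x / σ)) =
        e * ρ ^ k * (A0 * (x + D0) ^ α0) * ((b0 * x ^ (1/σ)) ^ (-(r:ℝ))) := by
      rw [E4, E3, hρdef, div_pow, ← E1]
      have hbβk : ((b0 ^ β) ^ k : ℝ) ≠ 0 := by positivity
      have hbr : (b0 ^ r : ℝ) ≠ 0 := by positivity
      field_simp
    calc a m ≤ A ^ k * ((x + D) ^ ((k:ℝ) * α)) *
        (A0 * (x + D0) ^ α0 / b0 ^ n * x ^ (-x / σ)) := step2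
      _ ≤ A ^ k * (x ^ ((k:ℝ) * α) * e) *
        (A0 * (x + D0) ^ α0 / b0 ^ n * x ^ (-x / σ)) := by
          apply mul_le_mul_of_nonneg_right _ (by positivity)
          exact mul_le_mul_of_nonneg_left F1 (by positivity)
      _ = e * ρ ^ k * (A0 * (x + D0) ^ α0) * ((b0 * x ^ (1/σ)) ^ (-(r:ℝ))) := heq
      _ ≤ e * ρ ^ k * (A0 * (Cm ^ α0 * (k:ℝ) ^ N)) * 1 := by
          gcongr
      _ = (e * A0 * Cm ^ α0) * ((k:ℝ) ^ N * ρ ^ k) := by ring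
  have ht : Filter.Tendsto (fun k : ℕ => (e * A0 * Cm ^ α0) * ((k:ℝ) ^ N * ρ ^ k))
      Filter.atTop (nhds 0) := by
    have := (tendsto_pow_const_mul_const_pow_of_lt_one N hρ0.le hρ1).const_mul
      (e * A0 * Cm ^ α0)
    simpa using this
  have hle : a m ≤ 0 := by
    apply ge_of_tendsto ht
    filter_upwards [Filter.eventually_ge_atTop (K + 1)] with k hk
    exact main k hk
  exact le_antisymm hle (ha m)
end

section
/- Let $(a_m)_{m\in\mathbb{N}}$ be a sequence of nonnegative real numbers and $E\subset\mathbb{N}\setminus\{0\}$ a finite nonempty set with $\beta^* = \max E$. Suppose there exist constants $A\ge 1$, $D\ge 0$ and $\alpha < 0$ such that $a_m \le A(m+D)^{\alpha}\max_{j\in E} a_{m+j}$ for all $m\in\mathbb{N}$, and constants $A_0,b_0>0$, $D_0,\alpha_0\ge 0$ and $\sigma\ne 0$ such that $a_m \le A_0 (m+D_0)^{\alpha_0} b_0^{-m} m^{-m/\sigma}$ for all $m\ge 1$. If $\alpha < \beta^*/\sigma$, then $a_m = 0$ for all $m\in\mathbb{N}$. -/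
open MvPolynomial Finset Filter

lemma aux_pow_le_exp_mul_factorial (k : ℕ) : (k:ℝ)^k ≤ Real.exp k * k.factorial := by
  induction k with
  | zero => simp
  | succ k ih =>
    rcases Nat.eq_zero_or_pos k with rfl | hk
    · simpa using Real.one_le_exp (by norm_num : (0:ℝ) ≤ 1)
    · have hk0 : (0:ℝ) < k := by exact_mod_cast hk
      have h2 : (1 + 1/(k:ℝ))^k ≤ Real.exp 1 := by
        calc (1+1/(k:ℝ))^k ≤ (Real.exp (1/k))^k := by
              apply pow_le_pow_left₀ (by positivity)
              linarith [Real.add_one_le_exp (1/(k:ℝ))]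
          _ = Real.exp (k * (1/k)) := by rw [Real.exp_nat_mul]
          _ = Real.exp 1 := by rw [mul_one_div, div_self (ne_of_gt hk0)]
      have h1 : ((k:ℝ)+1)^k ≤ Real.exp 1 * (k:ℝ)^k := by
        have hmul : ((k:ℝ)+1) = (k:ℝ) * (1 + 1/k) := by field_simp
        rw [hmul, mul_pow]
        have hkk : (0:ℝ) ≤ (k:ℝ)^k := by positivity
        nlinarith [h2, hkk]
      calc ((k+1:ℕ):ℝ)^(k+1) = ((k:ℝ)+1) * ((k:ℝ)+1)^k := by push_cast; ring
        _ ≤ ((k:ℝ)+1) * (Real.exp 1 * (k:ℝ)^k) := by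
            apply mul_le_mul_of_nonneg_left h1 (by positivity)
        _ ≤ ((k:ℝ)+1) * (Real.exp 1 * (Real.exp k * k.factorial)) := by
            apply mul_le_mul_of_nonneg_left _ (by positivity)
            exact mul_le_mul_of_nonneg_left ih (le_of_lt (Real.exp_pos 1))
        _ = Real.exp ((k:ℝ)+1) * (((k:ℝ)+1) * k.factorial) := by rw [Real.exp_add]; ring
        _ = Real.exp ((k+1:ℕ):ℝ) * ((k+1).factorial) := by
            rw [Nat.factorial_succ]; push_cast; ring

set_option maxHeartbeats 1000000 in
/-- Vanishing lemma for sequences, case `α < 0`, `α < β*/σ`. -/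
theorem stmt_2 (a : ℕ → ℝ) (ha : ∀ m, 0 ≤ a m)
    (E : Finset ℕ) (hE : E.Nonempty) (hE0 : 0 ∉ E)
    (A D α : ℝ) (hA : 1 ≤ A) (hD : 0 ≤ D) (hα : α < 0)
    (h1 : ∀ m : ℕ, a m ≤ A * ((m : ℝ) + D) ^ α * E.sup' hE (fun j => a (m + j)))
    (A0 b0 D0 α0 σ : ℝ) (hA0 : 0 < A0) (hb0 : 0 < b0) (hD0 : 0 ≤ D0) (hα0 : 0 ≤ α0)
    (hσ : σ ≠ 0)
    (h2 : ∀ m : ℕ, 1 ≤ m →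
      a m ≤ A0 * ((m : ℝ) + D0) ^ α0 / b0 ^ m * (m : ℝ) ^ (-(m : ℝ) / σ))
    (hmain : α < (E.max' hE : ℝ) / σ) :
    ∀ m, a m = 0 := by
  set β := E.max' hE with hβ
  have hβE : β ∈ E := E.max'_mem hE
  have hβ1 : 1 ≤ β := Nat.one_le_iff_ne_zero.2 (fun h => hE0 (h ▸ hβE))
  suffices hpos : ∀ m : ℕ, 1 ≤ m → a m = 0 by
    intro m
    rcases Nat.eq_zero_or_pos m with rfl | hm
    · have h := h1 0
      have hsup : E.sup' hE (fun j => a (0 + j)) = 0 := by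
        apply le_antisymm
        · apply Finset.sup'_le
          intro j hj
          have hj1 : 1 ≤ j := Nat.one_le_iff_ne_zero.2 (by rintro rfl; exact hE0 hj)
          exact le_of_eq (hpos (0 + j) (by omega))
        · obtain ⟨j, hj⟩ := hE
          exact le_trans (ha (0 + j)) (Finset.le_sup' (fun j => a (0 + j)) hj)
      rw [hsup, mul_zero] at h
      exact le_antisymm h (ha 0)
    · exact hpos m hm
  intro m hm
  have hm1 : (1:ℝ) ≤ (m:ℝ) := by exact_mod_cast hm
  -- Step 1: the iteration chain
  have chain : ∀ k : ℕ, ∃ M : ℕ, m + k ≤ M ∧ M ≤ m + k * β ∧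
      a m ≤ A ^ k * (∏ i ∈ Finset.range k, ((m:ℝ) + i + D) ^ α) * a M := by
    intro k
    induction k with
    | zero => exact ⟨m, by omega, by simp, by simp⟩
    | succ k ih =>
      obtain ⟨M, hM1, hM2, hM3⟩ := ih
      obtain ⟨j, hjE, hj⟩ := Finset.exists_mem_eq_sup' hE (fun j => a (M + j))
      have hj1 : 1 ≤ j := Nat.one_le_iff_ne_zero.2 (by rintro rfl; exact hE0 hjE)
      have hjβ : j ≤ β := E.le_max' j hjE
      refine ⟨M + j, by omega, ?_, ?_⟩
      · rw [Nat.succ_mul, ← Nat.add_assoc]; exact Nat.add_le_add hM2 hjβ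
      have hmkD : (0:ℝ) < (m:ℝ) + k + D := by positivity
      have hMD : ((M:ℝ) + D) ^ α ≤ ((m:ℝ) + (k:ℝ) + D) ^ α := by
        apply Real.rpow_le_rpow_of_nonpos hmkD _ (le_of_lt hα)
        have : ((m:ℝ) + k) ≤ (M:ℝ) := by exact_mod_cast hM1
        linarith
      have hstep : a M ≤ A * (((m:ℝ) + k + D) ^ α) * a (M + j) := by
        have hh := h1 M
        rw [hj] at hh
        calc a M ≤ A * ((M:ℝ) + D) ^ α * a (M + j) := hh
          _ ≤ A * (((m:ℝ) + k + D) ^ α) * a (M + j) := by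
              apply mul_le_mul_of_nonneg_right _ (ha _)
              exact mul_le_mul_of_nonneg_left hMD (by linarith)
      have hP : (0:ℝ) ≤ ∏ i ∈ Finset.range k, ((m:ℝ) + i + D) ^ α :=
        Finset.prod_nonneg fun i _ => Real.rpow_nonneg (by positivity) _
      have hAk : (0:ℝ) ≤ A ^ k := by positivity
      calc a m ≤ A ^ k * (∏ i ∈ Finset.range k, ((m:ℝ) + i + D) ^ α) * a M := hM3
        _ ≤ A ^ k * (∏ i ∈ Finset.range k, ((m:ℝ) + i + D) ^ α) *
            (A * (((m:ℝ) + k + D) ^ α) * a (M + j)) := by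
            exact mul_le_mul_of_nonneg_left hstep (by positivity)
        _ = A ^ (k+1) * (∏ i ∈ Finset.range (k+1), ((m:ℝ) + i + D) ^ α) * a (M + j) := by
            rw [Finset.prod_range_succ, pow_succ]; ring
  -- Step 2: bound on the sigma term
  obtain ⟨e2, e1, e0, hc2, hσb⟩ : ∃ e2 e1 e0 : ℝ, α + e2 < 0 ∧
      ∀ (k M : ℕ), 1 ≤ k → m + k ≤ M → M ≤ m + k * β →
        -(((M:ℝ)) * Real.log M) / σ ≤ e2 * ((k:ℝ) * Real.log k) + e1 * k + e0 := by
    rcases lt_or_gt_of_ne hσ with hσneg | hσpos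
    · -- σ < 0
      have ht : (0:ℝ) < -1/σ := by
        rw [neg_div, neg_pos]
        exact one_div_neg.mpr hσneg
      refine ⟨(β:ℝ) * (-1/σ), (-1/σ) * ((m:ℝ) + β * Real.log ((m:ℝ)+β)),
          (-1/σ) * ((m:ℝ) * Real.log ((m:ℝ)+β)), ?_, ?_⟩
      · have : α - (β:ℝ)/σ < 0 := by linarith [hmain]
        have heq : (β:ℝ) * (-1/σ) = -((β:ℝ)/σ) := by ring
        linarith [heq ▸ le_refl ((β:ℝ) * (-1/σ))]
      · intro k M hk hkM hMk
        have hk1 : (1:ℝ) ≤ (k:ℝ) := by exact_mod_cast hk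
        have hM1r : (1:ℝ) ≤ (M:ℝ) := by
          have : 1 ≤ M := by omega
          exact_mod_cast this
        have hβr : (1:ℝ) ≤ (β:ℝ) := by exact_mod_cast hβ1
        have hN : (M:ℝ) ≤ (m:ℝ) + k * β := by exact_mod_cast hMk
        have hNpos : (0:ℝ) < (m:ℝ) + k * β := by positivity
        have hN1 : (1:ℝ) ≤ (m:ℝ) + k * β := by nlinarith
        have hlogN : Real.log ((m:ℝ) + k*β) ≤ Real.log k + Real.log ((m:ℝ)+β) := by
          rw [← Real.log_mul (by positivity) (by positivity)]
          apply Real.log_le_log hNpos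
          nlinarith
        have hlogM : Real.log (M:ℝ) ≤ Real.log ((m:ℝ) + k*β) := Real.log_le_log (by linarith) hN
        have hlogMnn : 0 ≤ Real.log (M:ℝ) := Real.log_nonneg hM1r
        have hlogNnn : 0 ≤ Real.log ((m:ℝ) + k*β) := Real.log_nonneg hN1
        have hlogk : Real.log (k:ℝ) ≤ (k:ℝ) := Real.log_le_self (by positivity)
        have hlogknn : 0 ≤ Real.log (k:ℝ) := Real.log_nonneg hk1
        have hlogmβnn : 0 ≤ Real.log ((m:ℝ)+β) := Real.log_nonneg (by linarith)
        have hMM : (M:ℝ) * Real.log M ≤ ((m:ℝ) + k*β) * Real.log ((m:ℝ) + k*β) := by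
          apply mul_le_mul hN hlogM hlogMnn (by linarith)
        have hMM2 : ((m:ℝ) + k*β) * Real.log ((m:ℝ) + k*β) ≤
            (k:ℝ)*β*Real.log k + (m:ℝ)*k + ((m:ℝ) + k*β) * Real.log ((m:ℝ)+β) := by
          have h3 : ((m:ℝ) + k*β) * Real.log ((m:ℝ) + k*β) ≤
              ((m:ℝ) + k*β) * (Real.log k + Real.log ((m:ℝ)+β)) :=
            mul_le_mul_of_nonneg_left hlogN (by positivity)
          nlinarith
        have key : (M:ℝ) * Real.log M ≤
            (k:ℝ)*β*Real.log k + (m:ℝ)*k + ((m:ℝ) + k*β) * Real.log ((m:ℝ)+β) := by linarith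
        have : -(((M:ℝ)) * Real.log M) / σ = (-1/σ) * ((M:ℝ) * Real.log M) := by ring
        rw [this]
        calc (-1/σ) * ((M:ℝ) * Real.log M)
            ≤ (-1/σ) * ((k:ℝ)*β*Real.log k + (m:ℝ)*k + ((m:ℝ) + k*β) * Real.log ((m:ℝ)+β)) :=
              mul_le_mul_of_nonneg_left key (le_of_lt ht)
          _ = (β:ℝ) * (-1/σ) * ((k:ℝ) * Real.log k)
              + (-1/σ) * ((m:ℝ)*k + (k:ℝ)*β * Real.log ((m:ℝ)+β))
              + (-1/σ) * ((m:ℝ) * Real.log ((m:ℝ)+β)) := by ring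
          _ ≤ _ := by
              have : (-1/σ) * ((m:ℝ)*k + (k:ℝ)*β * Real.log ((m:ℝ)+β)) =
                  ((-1/σ) * ((m:ℝ) + β * Real.log ((m:ℝ)+β))) * k := by ring
              rw [this]
    · -- σ > 0
      have hts : (0:ℝ) < 1/σ := by positivity
      refine ⟨-1/σ, 0, 0, by rw [neg_div]; linarith, ?_⟩
      intro k M hk hkM hMk
      have hk1 : (1:ℝ) ≤ (k:ℝ) := by exact_mod_cast hk
      have hkM' : (k:ℝ) ≤ (M:ℝ) := by
        have : k ≤ M := by omega
        exact_mod_cast this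
      have hlogknn : 0 ≤ Real.log (k:ℝ) := Real.log_nonneg hk1
      have hkk : (k:ℝ) * Real.log k ≤ (M:ℝ) * Real.log M :=
        mul_le_mul hkM' (Real.log_le_log (by linarith) hkM') hlogknn (by linarith)
      calc -(((M:ℝ)) * Real.log M) / σ ≤ -((k:ℝ) * Real.log k) / σ :=
            (div_le_div_iff_of_pos_right hσpos).mpr (by linarith)
        _ = (-1/σ) * ((k:ℝ) * Real.log k) + 0 * k + 0 := by ring
  -- Step 3: combine into an exponential bound
  set c1 : ℝ := Real.log A - α + α0 * (β:ℝ) + (β:ℝ) * |Real.log b0| + e1 with hc1def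
  set c0 : ℝ := Real.log A0 + α0 * ((m:ℝ) + D0) + (m:ℝ) * |Real.log b0| + e0 with hc0def
  have key : ∀ k : ℕ, 1 ≤ k →
      a m ≤ Real.exp (c0 + c1 * k + (α + e2) * ((k:ℝ) * Real.log k)) := by
    intro k hk
    obtain ⟨M, hM1, hM2, hM3⟩ := chain k
    have hk1 : (1:ℝ) ≤ (k:ℝ) := by exact_mod_cast hk
    have hMnat1 : 1 ≤ M := by omega
    have hM1r : (1:ℝ) ≤ (M:ℝ) := by exact_mod_cast hMnat1
    have hNr : (M:ℝ) ≤ (m:ℝ) + k * β := by exact_mod_cast hM2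
    -- product bound
    have hprod : (∏ i ∈ Finset.range k, ((m:ℝ) + i + D) ^ α) ≤ ((k.factorial : ℝ)) ^ α := by
      have hp1 : (∏ i ∈ Finset.range k, ((m:ℝ) + i + D) ^ α) ≤
          ∏ i ∈ Finset.range k, ((1:ℝ) + i) ^ α := by
        apply Finset.prod_le_prod
        · intro i _; exact Real.rpow_nonneg (by positivity) _
        · intro i _
          exact Real.rpow_le_rpow_of_nonpos (by positivity) (by linarith [hm1]) (le_of_lt hα)
      have hfe : (∏ i ∈ Finset.range k, ((1:ℝ) + i)) = (k.factorial : ℝ) := by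
        rw [← Finset.prod_range_add_one_eq_factorial, Nat.cast_prod]
        exact Finset.prod_congr rfl fun i _ => by push_cast; ring
      have hp2 : ∏ i ∈ Finset.range k, ((1:ℝ) + i) ^ α = ((k.factorial:ℝ)) ^ α := by
        rw [Real.finset_prod_rpow _ _ (fun i _ => by positivity), hfe]
      linarith
    -- factorial lower bound
    have hkpos : (0:ℝ) < k := by linarith
    have hfac : Real.exp ((k:ℝ) * Real.log k - k) ≤ (k.factorial : ℝ) := by
      have h := aux_pow_le_exp_mul_factorial k
      have hkpow : (k:ℝ) ^ k = Real.exp ((k:ℝ) * Real.log k) := by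
        rw [← Real.rpow_natCast (k:ℝ) k, Real.rpow_def_of_pos hkpos, mul_comm]
      rw [hkpow] at h
      rw [Real.exp_sub, div_le_iff₀ (Real.exp_pos _)]
      linarith
    have hfa : ((k.factorial:ℝ)) ^ α ≤ Real.exp (α * ((k:ℝ) * Real.log k - k)) := by
      calc ((k.factorial:ℝ)) ^ α ≤ (Real.exp ((k:ℝ) * Real.log k - k)) ^ α :=
            Real.rpow_le_rpow_of_nonpos (Real.exp_pos _) hfac (le_of_lt hα)
        _ = Real.exp (α * ((k:ℝ) * Real.log k - k)) := by
            rw [← Real.exp_mul, mul_comm]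
    -- exponential form of A ^ k
    have hAk : A ^ k = Real.exp ((k:ℝ) * Real.log A) := by
      rw [Real.exp_nat_mul, Real.exp_log (by linarith : (0:ℝ) < A)]
    -- bound a M
    have hDM : ((M:ℝ) + D0) ^ α0 ≤ Real.exp (α0 * ((m:ℝ) + k * β + D0)) := by
      have hMD0 : (0:ℝ) < (M:ℝ) + D0 := by linarith
      rw [Real.rpow_def_of_pos hMD0, Real.exp_le_exp]
      have hlog : Real.log ((M:ℝ) + D0) ≤ (m:ℝ) + k * β + D0 := by
        have := Real.log_le_self (le_of_lt hMD0)
        linarith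
      calc Real.log ((M:ℝ) + D0) * α0 = α0 * Real.log ((M:ℝ) + D0) := mul_comm _ _
        _ ≤ α0 * ((m:ℝ) + k * β + D0) := mul_le_mul_of_nonneg_left hlog hα0
    have hbM : (1:ℝ) / b0 ^ M ≤ Real.exp (((m:ℝ) + k * β) * |Real.log b0|) := by
      have hb : b0 ^ M = Real.exp ((M:ℝ) * Real.log b0) := by
        rw [Real.exp_nat_mul, Real.exp_log hb0]
      rw [hb, one_div, ← Real.exp_neg, Real.exp_le_exp]
      have hh1 : -((M:ℝ) * Real.log b0) ≤ (M:ℝ) * |Real.log b0| := by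
        calc -((M:ℝ) * Real.log b0) = (M:ℝ) * (-Real.log b0) := by ring
          _ ≤ (M:ℝ) * |Real.log b0| :=
              mul_le_mul_of_nonneg_left (neg_le_abs _) (by linarith)
      have hh2 : (M:ℝ) * |Real.log b0| ≤ ((m:ℝ) + k * β) * |Real.log b0| :=
        mul_le_mul_of_nonneg_right hNr (abs_nonneg _)
      linarith
    have hMσ : (M:ℝ) ^ (-(M:ℝ)/σ) ≤ Real.exp (e2 * ((k:ℝ) * Real.log k) + e1 * k + e0) := by
      rw [Real.rpow_def_of_pos (by linarith : (0:ℝ) < (M:ℝ)), Real.exp_le_exp]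
      calc Real.log M * (-(M:ℝ)/σ) = -((M:ℝ) * Real.log M) / σ := by ring
        _ ≤ _ := hσb k M hk hM1 hM2
    have haM : a M ≤ Real.exp (Real.log A0 + α0 * ((m:ℝ) + k * β + D0)
        + ((m:ℝ) + k * β) * |Real.log b0| + (e2 * ((k:ℝ) * Real.log k) + e1 * k + e0)) := by
      calc a M ≤ A0 * ((M:ℝ) + D0) ^ α0 / b0 ^ M * (M:ℝ) ^ (-(M:ℝ)/σ) := h2 M hMnat1
        _ = A0 * ((M:ℝ) + D0) ^ α0 * ((1:ℝ) / b0 ^ M) * (M:ℝ) ^ (-(M:ℝ)/σ) := by ring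
        _ ≤ Real.exp (Real.log A0) * Real.exp (α0 * ((m:ℝ) + k * β + D0))
            * Real.exp (((m:ℝ) + k * β) * |Real.log b0|)
            * Real.exp (e2 * ((k:ℝ) * Real.log k) + e1 * k + e0) := by
            have e1' : A0 ≤ Real.exp (Real.log A0) := le_of_eq (Real.exp_log hA0).symm
            have hbpos : (0:ℝ) < b0 ^ M := by positivity
            gcongr <;> positivity
        _ = Real.exp (Real.log A0 + α0 * ((m:ℝ) + k * β + D0)
            + ((m:ℝ) + k * β) * |Real.log b0| + (e2 * ((k:ℝ) * Real.log k) + e1 * k + e0)) := by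
            rw [← Real.exp_add, ← Real.exp_add, ← Real.exp_add]
    have hPn : (0:ℝ) ≤ ∏ i ∈ Finset.range k, ((m:ℝ) + i + D) ^ α :=
      Finset.prod_nonneg fun i _ => Real.rpow_nonneg (by positivity) _
    calc a m ≤ A ^ k * (∏ i ∈ Finset.range k, ((m:ℝ) + i + D) ^ α) * a M := hM3
      _ ≤ Real.exp ((k:ℝ) * Real.log A) * Real.exp (α * ((k:ℝ) * Real.log k - k))
          * Real.exp (Real.log A0 + α0 * ((m:ℝ) + k * β + D0)
            + ((m:ℝ) + k * β) * |Real.log b0| + (e2 * ((k:ℝ) * Real.log k) + e1 * k + e0)) := by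
          have hp : (∏ i ∈ Finset.range k, ((m:ℝ) + i + D) ^ α) ≤
              Real.exp (α * ((k:ℝ) * Real.log k - k)) := le_trans hprod hfa
          have hA' : A ^ k ≤ Real.exp ((k:ℝ) * Real.log A) := le_of_eq hAk
          gcongr <;> first | exact ha M | exact hPn | positivity
      _ = Real.exp ((k:ℝ) * Real.log A + α * ((k:ℝ) * Real.log k - k)
          + (Real.log A0 + α0 * ((m:ℝ) + k * β + D0)
            + ((m:ℝ) + k * β) * |Real.log b0| + (e2 * ((k:ℝ) * Real.log k) + e1 * k + e0))) := by
          rw [← Real.exp_add, ← Real.exp_add]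
      _ ≤ Real.exp (c0 + c1 * k + (α + e2) * ((k:ℝ) * Real.log k)) := by
          rw [Real.exp_le_exp, hc1def, hc0def]
          push_cast
          apply le_of_eq
          ring
  -- Step 4: pass to the limit
  have hc2' : α + e2 < 0 := hc2
  have hlim : Tendsto (fun k : ℕ => Real.exp (c0 + c1 * k + (α + e2) * ((k:ℝ) * Real.log k)))
      atTop (nhds 0) := by
    apply Real.tendsto_exp_atBot.comp
    have hfac2 : Tendsto (fun k : ℕ => c1 + (α + e2) * Real.log k) atTop atBot := by
      apply tendsto_atBot_add_const_left
      exact (Real.tendsto_log_atTop.comp tendsto_natCast_atTop_atTop).const_mul_atTop_of_neg hc2'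
    have hmul : Tendsto (fun k : ℕ => (k:ℝ) * (c1 + (α + e2) * Real.log k)) atTop atBot :=
      tendsto_natCast_atTop_atTop.atTop_mul_atBot₀ hfac2
    exact (tendsto_atBot_add_const_left atTop c0 hmul).congr (fun k => by ring)
  have hfin : a m ≤ 0 := by
    apply le_of_tendsto_of_tendsto tendsto_const_nhds hlim
    filter_upwards [eventually_ge_atTop 1] with k hk using key k hk
  linarith [ha m]
end

section
/- Let $P(z) = \sum_{|\alpha|=k} c_\alpha z^\alpha$ be a homogeneous polynomial of degree $k$ in $d$ complex variables and let $f_m$ be a homogeneous polynomial of degree $m$. Then $\|P f_m\|_a \le \|f_m\|_a \,(1+m)^{k/2} \sum_{|\alpha|=k} |c_\alpha| \sqrt{\alpha!}$. -/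
open MvPolynomial Finset Filter

/-! ### Auxiliary lemmas -/

lemma nat_fact_bound (a b : ℕ) :
    (a + b).factorial ≤ a.factorial * b.factorial * (a + 1) ^ b := by
  induction b with
  | zero => simp
  | succ b ih =>
    calc (a + (b + 1)).factorial = (a + b + 1) * (a + b).factorial := by
          rw [← Nat.add_assoc, Nat.factorial_succ]
    _ ≤ (a + b + 1) * (a.factorial * b.factorial * (a + 1) ^ b) :=
          Nat.mul_le_mul_left _ ih
    _ ≤ ((b + 1) * (a + 1)) * (a.factorial * b.factorial * (a + 1) ^ b) := by
          apply Nat.mul_le_mul_right; nlinarith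
    _ = a.factorial * ((b + 1) * b.factorial) * (a + 1) ^ (b + 1) := by ring
    _ = a.factorial * (b + 1).factorial * (a + 1) ^ (b + 1) := by
          rw [Nat.factorial_succ]

lemma mfact_add_le {d : ℕ} (α β : Fin d →₀ ℕ) {k m : ℕ}
    (hα : ∑ i, α i = k) (hβ : ∀ i, β i ≤ m) :
    mfact (α + β) ≤ mfact α * mfact β * (m + 1) ^ k := by
  classical
  have h : ∀ i : Fin d,
      ((α + β) i).factorial ≤ (β i).factorial * (α i).factorial * (m + 1) ^ (α i) := by
    intro i
    calc ((α + β) i).factorial = (β i + α i).factorial := by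
          rw [Finsupp.add_apply, Nat.add_comm]
    _ ≤ (β i).factorial * (α i).factorial * (β i + 1) ^ (α i) := nat_fact_bound _ _
    _ ≤ (β i).factorial * (α i).factorial * (m + 1) ^ (α i) := by
          gcongr
          exact hβ i
  calc mfact (α + β) = ∏ i, ((α + β) i).factorial := rfl
  _ ≤ ∏ i, ((β i).factorial * (α i).factorial * (m + 1) ^ (α i)) :=
        Finset.prod_le_prod' (fun i _ => h i)
  _ = (∏ i, (β i).factorial) * (∏ i, (α i).factorial) * ∏ i, (m + 1) ^ (α i) := by
        rw [Finset.prod_mul_distrib, Finset.prod_mul_distrib]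
  _ = mfact α * mfact β * (m + 1) ^ k := by
        rw [Finset.prod_pow_eq_pow_sum, hα, mfact, mfact]
        ring

lemma apolar_self_re {d : ℕ} (P : MvPolynomial (Fin d) ℂ) (S : Finset (Fin d →₀ ℕ))
    (hS : P.support ⊆ S) :
    (apolar P P).re = ∑ α ∈ S, (mfact α : ℝ) * Complex.normSq (P.coeff α) := by
  classical
  have h1 : apolar P P
      = ∑ α ∈ S, (mfact α : ℂ) * P.coeff α * (starRingEnd ℂ) (P.coeff α) := by
    rw [apolar, Finset.union_self]
    refine Finset.sum_subset hS ?_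
    intro x _ hx'
    rw [MvPolynomial.notMem_support_iff.mp hx']
    simp
  rw [h1, Complex.re_sum]
  refine Finset.sum_congr rfl fun α _ => ?_
  rw [mul_assoc, Complex.mul_conj]
  rw [show ((mfact α : ℂ)) = ((mfact α : ℝ) : ℂ) by push_cast; ring]
  rw [← Complex.ofReal_mul, Complex.ofReal_re]

/-- Model of a polynomial inside a Euclidean space indexed by a finset of exponents. -/
noncomputable def vmap {d : ℕ} (S : Finset (Fin d →₀ ℕ)) (P : MvPolynomial (Fin d) ℂ) :
    EuclideanSpace ℂ S := WithLp.toLp 2 (fun α => (Real.sqrt (mfact (α : Fin d →₀ ℕ)) : ℂ) * P.coeff (α : Fin d →₀ ℕ))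

lemma apolarNorm_eq_norm_vmap {d : ℕ} (P : MvPolynomial (Fin d) ℂ)
    (S : Finset (Fin d →₀ ℕ)) (hS : P.support ⊆ S) :
    apolarNorm P = ‖vmap S P‖ := by
  rw [apolarNorm, apolar_self_re P S hS, EuclideanSpace.norm_eq]
  congr 1
  rw [← Finset.sum_coe_sort S (fun α => (mfact α : ℝ) * Complex.normSq (P.coeff α))]
  refine Finset.sum_congr rfl fun α _ => ?_
  simp only [vmap, PiLp.toLp_apply, Complex.sq_norm, Complex.normSq_mul,
    Complex.normSq_ofReal]
  rw [Real.mul_self_sqrt (by positivity)]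

lemma vmap_sum {d : ℕ} {ι : Type*} (S : Finset (Fin d →₀ ℕ)) (s : Finset ι)
    (g : ι → MvPolynomial (Fin d) ℂ) :
    vmap S (∑ i ∈ s, g i) = ∑ i ∈ s, vmap S (g i) := by
  ext α
  have h : (∑ i ∈ s, vmap S (g i)) α = ∑ i ∈ s, vmap S (g i) α := by
    induction s using Finset.cons_induction with
    | empty => rfl
    | cons i s hi ih => rw [Finset.sum_cons, Finset.sum_cons, ← ih]; rfl
  rw [h]
  simp only [vmap, PiLp.toLp_apply, MvPolynomial.coeff_sum, Finset.mul_sum]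

lemma apolarNorm_sum_le {d : ℕ} {ι : Type*} (s : Finset ι)
    (g : ι → MvPolynomial (Fin d) ℂ) :
    apolarNorm (∑ i ∈ s, g i) ≤ ∑ i ∈ s, apolarNorm (g i) := by
  classical
  set S := (∑ i ∈ s, g i).support ∪ s.biUnion (fun i => (g i).support) with hSdef
  have h1 : apolarNorm (∑ i ∈ s, g i) = ‖vmap S (∑ i ∈ s, g i)‖ :=
    apolarNorm_eq_norm_vmap _ _ Finset.subset_union_left
  have h2 : ∀ i ∈ s, apolarNorm (g i) = ‖vmap S (g i)‖ := by
    intro i hi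
    refine apolarNorm_eq_norm_vmap _ _ (Finset.Subset.trans ?_ Finset.subset_union_right)
    exact fun x hx => Finset.mem_biUnion.2 ⟨i, hi, hx⟩
  rw [h1, vmap_sum]
  refine le_trans (norm_sum_le _ _) (le_of_eq ?_)
  exact Finset.sum_congr rfl fun i hi => (h2 i hi).symm

lemma apolarNorm_nonneg {d : ℕ} (P : MvPolynomial (Fin d) ℂ) : 0 ≤ apolarNorm P :=
  Real.sqrt_nonneg _

lemma apolarNorm_monomial_mul {d m k : ℕ} (α : Fin d →₀ ℕ) (c : ℂ)
    (f : MvPolynomial (Fin d) ℂ) (hf : f.IsHomogeneous m) (hα : ∑ i, α i = k) :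
    apolarNorm ((MvPolynomial.monomial α c) * f) ≤
      ‖c‖ * Real.sqrt (mfact α) * Real.sqrt ((m + 1) ^ k) * apolarNorm f := by
  classical
  set S : Finset (Fin d →₀ ℕ) := f.support.map (addLeftEmbedding α) with hSdef
  have hsub : (MvPolynomial.monomial α c * f).support ⊆ S := by
    intro γ hγ
    have hcoeff := MvPolynomial.mem_support_iff.1 hγ
    rw [MvPolynomial.coeff_monomial_mul'] at hcoeff
    by_cases hle : α ≤ γ
    · rw [if_pos hle] at hcoeff
      have hne : f.coeff (γ - α) ≠ 0 := fun h => hcoeff (by rw [h, mul_zero])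
      refine Finset.mem_map.2 ⟨γ - α, MvPolynomial.mem_support_iff.2 hne, ?_⟩
      simpa [addLeftEmbedding] using (add_tsub_cancel_of_le hle)
    · rw [if_neg hle] at hcoeff; exact absurd rfl hcoeff
  have hre : (apolar (MvPolynomial.monomial α c * f) (MvPolynomial.monomial α c * f)).re
      = ∑ β ∈ f.support, (mfact (α + β) : ℝ) * (Complex.normSq c * Complex.normSq (f.coeff β)) := by
    rw [apolar_self_re _ S hsub, hSdef, Finset.sum_map]
    refine Finset.sum_congr rfl fun β _ => ?_
    have : (addLeftEmbedding α) β = α + β := rfl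
    rw [this, MvPolynomial.coeff_monomial_mul, Complex.normSq_mul]
  have hbd : (apolar (MvPolynomial.monomial α c * f) (MvPolynomial.monomial α c * f)).re
      ≤ Complex.normSq c * (mfact α : ℝ) * ((m + 1 : ℕ) ^ k : ℝ) * (apolar f f).re := by
    rw [hre, apolar_self_re f f.support (Finset.Subset.refl _)]
    rw [Finset.mul_sum]
    refine Finset.sum_le_sum fun β hβ => ?_
    have hβm : ∀ i, β i ≤ m := by
      intro i
      have hdeg : β.degree = m := by
        have := hf (MvPolynomial.mem_support_iff.1 hβ)
        rw [Finsupp.degree_eq_weight_one]; exact this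
      calc β i ≤ β.degree := Finsupp.le_degree i β
      _ = m := hdeg
    have hmf : (mfact (α + β) : ℝ) ≤ (mfact α : ℝ) * (mfact β : ℝ) * ((m + 1) ^ k : ℕ) := by
      have := mfact_add_le α β hα hβm
      calc (mfact (α + β) : ℝ) ≤ ((mfact α * mfact β * (m + 1) ^ k : ℕ) : ℝ) := by
            exact_mod_cast this
      _ = (mfact α : ℝ) * (mfact β : ℝ) * ((m + 1) ^ k : ℕ) := by push_cast; ring
    calc (mfact (α + β) : ℝ) * (Complex.normSq c * Complex.normSq (f.coeff β))
        ≤ ((mfact α : ℝ) * (mfact β : ℝ) * ((m + 1) ^ k : ℕ))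
            * (Complex.normSq c * Complex.normSq (f.coeff β)) := by
          exact mul_le_mul_of_nonneg_right hmf
            (mul_nonneg (Complex.normSq_nonneg _) (Complex.normSq_nonneg _))
    _ = Complex.normSq c * (mfact α : ℝ) * ((m + 1 : ℕ) ^ k : ℝ)
            * ((mfact β : ℝ) * Complex.normSq (f.coeff β)) := by push_cast; ring
  rw [apolarNorm, apolarNorm]
  calc Real.sqrt (apolar (MvPolynomial.monomial α c * f) (MvPolynomial.monomial α c * f)).re
      ≤ Real.sqrt (Complex.normSq c * (mfact α : ℝ) * ((m + 1 : ℕ) ^ k : ℝ) * (apolar f f).re) :=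
        Real.sqrt_le_sqrt hbd
  _ = Real.sqrt (Complex.normSq c) * Real.sqrt (mfact α : ℝ) * Real.sqrt ((m + 1 : ℕ) ^ k : ℝ)
        * Real.sqrt (apolar f f).re := by
        rw [Real.sqrt_mul (mul_nonneg (mul_nonneg (Complex.normSq_nonneg _) (by positivity))
            (by positivity)),
          Real.sqrt_mul (mul_nonneg (Complex.normSq_nonneg _) (by positivity)),
          Real.sqrt_mul (Complex.normSq_nonneg _)]
  _ = ‖c‖ * Real.sqrt (mfact α) * Real.sqrt ((m + 1) ^ k)
        * Real.sqrt (apolar f f).re := by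
        rw [show Real.sqrt (Complex.normSq c) = ‖c‖ by
          rw [← Complex.sq_norm, Real.sqrt_sq (norm_nonneg c)]]
        norm_num

set_option maxHeartbeats 1000000

/-- Beauzamy's multiplier bound: `‖P f_m‖_a ≤ ‖f_m‖_a (1+m)^{k/2} ∑ |c_α| √(α!)`. -/
theorem stmt_6 {d k m : ℕ} (P f : MvPolynomial (Fin d) ℂ)
    (hP : P.IsHomogeneous k) (hf : f.IsHomogeneous m) :
    apolarNorm (P * f) ≤ apolarNorm f * ((1 : ℝ) + m) ^ ((k : ℝ) / 2) *
      ∑ α ∈ P.support, ‖P.coeff α‖ * Real.sqrt (mfact α) := by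
  classical
  have hPf : P * f = ∑ α ∈ P.support, (MvPolynomial.monomial α (P.coeff α)) * f := by
    conv_lhs => rw [P.as_sum]
    rw [Finset.sum_mul]
  have hdeg : ∀ α ∈ P.support, ∑ i, α i = k := by
    intro α hα
    have h1 : α.degree = k := by
      have := hP (MvPolynomial.mem_support_iff.1 hα)
      rw [Finsupp.degree_eq_weight_one]; exact this
    rw [← h1, Finsupp.degree]
    exact (Finset.sum_subset (Finset.subset_univ _)
      (fun x _ hx => Finsupp.notMem_support_iff.1 hx)).symm
  have hsqrt : Real.sqrt (((m : ℝ) + 1) ^ k) = ((1 : ℝ) + m) ^ ((k : ℝ) / 2) := by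
    rw [show ((m : ℝ) + 1) = (1 : ℝ) + m by ring, Real.sqrt_eq_rpow,
      ← Real.rpow_natCast ((1 : ℝ) + m) k, ← Real.rpow_mul (by positivity)]
    congr 1
    ring
  calc apolarNorm (P * f)
      = apolarNorm (∑ α ∈ P.support, (MvPolynomial.monomial α (P.coeff α)) * f) := by rw [hPf]
  _ ≤ ∑ α ∈ P.support, apolarNorm ((MvPolynomial.monomial α (P.coeff α)) * f) :=
      apolarNorm_sum_le _ _
  _ ≤ ∑ α ∈ P.support, ‖P.coeff α‖ * Real.sqrt (mfact α)
        * Real.sqrt (((m : ℝ) + 1) ^ k) * apolarNorm f := by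
      refine Finset.sum_le_sum fun α hα => ?_
      exact apolarNorm_monomial_mul α (P.coeff α) f hf (hdeg α hα)
  _ = apolarNorm f * ((1 : ℝ) + m) ^ ((k : ℝ) / 2) *
        ∑ α ∈ P.support, ‖P.coeff α‖ * Real.sqrt (mfact α) := by
      rw [Finset.mul_sum]
      refine Finset.sum_congr rfl fun α _ => ?_
      rw [hsqrt]; ring
end
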